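/- arXiv:2105.06819 — 3 statements merged into one kernel-verified Lean document; each statement's English description precedes it below -/
import Mathlib

section
/- Let G be a finite simple graph with p vertices and q edges, let n ≥ 1 be an integer, and let t = n or t = n − 1. For every nonzero real number τ, the multiplicity of √((t+1)(n+1))·τ as an eigenvalue of the adjacency matrix of S(G)_t^n equals the multiplicity of τ as an eigenvalue of A(S(G)); consequently, the multiplicity of 0 as an eigenvalue of the adjacency matrix of S(G)_t^n is (n+1)p + (t+1)q − 2r, where 2r is the rank of A(S(G)). -/
open Matrix

noncomputable section

/-- The multiplicity of `μ` as an eigenvalue of a real matrix `M`: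
the dimension of the kernel of `M - μ·Id`. -/
def eigMult {n : Type} [Fintype n] [DecidableEq n] (M : Matrix n n ℝ) (μ : ℝ) : ℕ :=
  Module.finrank ℝ (LinearMap.ker (Matrix.toLin' (M - μ • (1 : Matrix n n ℝ))))

/-- The energy of a real symmetric matrix: the sum of the absolute values of its
eigenvalues, counted with multiplicity. -/
def matEnergy {n : Type} [Fintype n] [DecidableEq n] (M : Matrix n n ℝ) : ℝ :=
  if h : M.IsHermitian then ∑ i, |h.eigenvalues i| else 0

/-- The incidence matrix of a graph, rows indexed by vertices, columns by edges. -/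
def incid {V : Type} [DecidableEq V] (G : SimpleGraph V) : Matrix V G.edgeSet ℝ :=
  fun v e => if v ∈ (e : Sym2 V) then 1 else 0

/-- Adjacency matrix of the subdivision graph `S(G)`. -/
def AS {V : Type} [DecidableEq V] (G : SimpleGraph V) :
    Matrix (V ⊕ G.edgeSet) (V ⊕ G.edgeSet) ℝ :=
  Matrix.fromBlocks 0 (incid G) (incid G)ᵀ 0

/-- Adjacency matrix of `S(G)_k`. -/
def ASk {V : Type} [DecidableEq V] (G : SimpleGraph V) (k : ℕ) :
    Matrix (V ⊕ (Fin k × G.edgeSet)) (V ⊕ (Fin k × G.edgeSet)) ℝ :=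
  fun x y => match x, y with
    | Sum.inl v, Sum.inr (_, e) => if v ∈ (e : Sym2 V) then 1 else 0
    | Sum.inr (_, e), Sum.inl v => if v ∈ (e : Sym2 V) then 1 else 0
    | _, _ => 0

/-- Adjacency matrix of `S(G)_t^n`. -/
def AStn {V : Type} [DecidableEq V] (G : SimpleGraph V) (n t : ℕ) :
    Matrix ((Fin (n + 1) × V) ⊕ (Fin (t + 1) × G.edgeSet))
           ((Fin (n + 1) × V) ⊕ (Fin (t + 1) × G.edgeSet)) ℝ :=
  fun x y => match x, y with
    | Sum.inl (_, v), Sum.inr (_, e) => if v ∈ (e : Sym2 V) then 1 else 0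
    | Sum.inr (_, e), Sum.inl (_, v) => if v ∈ (e : Sym2 V) then 1 else 0
    | _, _ => 0

/-- The subdivision graph `S(G)` as a simple graph. -/
def SGGraph {V : Type} (G : SimpleGraph V) : SimpleGraph (V ⊕ G.edgeSet) where
  Adj x y :=
    (∃ (v : V) (e : G.edgeSet), x = Sum.inl v ∧ y = Sum.inr e ∧ v ∈ (e : Sym2 V)) ∨
    (∃ (v : V) (e : G.edgeSet), x = Sum.inr e ∧ y = Sum.inl v ∧ v ∈ (e : Sym2 V))
  symm := by
    refine ⟨?_⟩
    rintro x y (⟨v, e, rfl, rfl, h⟩ | ⟨v, e, rfl, rfl, h⟩)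
    · exact Or.inr ⟨v, e, rfl, rfl, h⟩
    · exact Or.inl ⟨v, e, rfl, rfl, h⟩
  loopless := by
    refine ⟨?_⟩
    rintro x (⟨v, e, h1, h2, _⟩ | ⟨v, e, h1, h2, _⟩) <;> subst h1 <;> simp_all

/-- The graph `S(G)_k`. -/
def SGkGraph {V : Type} (G : SimpleGraph V) (k : ℕ) :
    SimpleGraph (V ⊕ (Fin k × G.edgeSet)) where
  Adj x y :=
    (∃ (v : V) (ie : Fin k × G.edgeSet),
        x = Sum.inl v ∧ y = Sum.inr ie ∧ v ∈ (ie.2 : Sym2 V)) ∨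
    (∃ (v : V) (ie : Fin k × G.edgeSet),
        x = Sum.inr ie ∧ y = Sum.inl v ∧ v ∈ (ie.2 : Sym2 V))
  symm := by
    refine ⟨?_⟩
    rintro x y (⟨v, ie, rfl, rfl, h⟩ | ⟨v, ie, rfl, rfl, h⟩)
    · exact Or.inr ⟨v, ie, rfl, rfl, h⟩
    · exact Or.inl ⟨v, ie, rfl, rfl, h⟩
  loopless := by
    refine ⟨?_⟩
    rintro x (⟨v, ie, h1, h2, _⟩ | ⟨v, ie, h1, h2, _⟩) <;> subst h1 <;> simp_all

/-- The graph `S(G)_t^n`. -/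
def SGtnGraph {V : Type} (G : SimpleGraph V) (n t : ℕ) :
    SimpleGraph ((Fin (n + 1) × V) ⊕ (Fin (t + 1) × G.edgeSet)) where
  Adj x y :=
    (∃ (iv : Fin (n + 1) × V) (je : Fin (t + 1) × G.edgeSet),
        x = Sum.inl iv ∧ y = Sum.inr je ∧ iv.2 ∈ (je.2 : Sym2 V)) ∨
    (∃ (iv : Fin (n + 1) × V) (je : Fin (t + 1) × G.edgeSet),
        x = Sum.inr je ∧ y = Sum.inl iv ∧ iv.2 ∈ (je.2 : Sym2 V))
  symm := by
    refine ⟨?_⟩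
    rintro x y (⟨iv, je, rfl, rfl, h⟩ | ⟨iv, je, rfl, rfl, h⟩)
    · exact Or.inr ⟨iv, je, rfl, rfl, h⟩
    · exact Or.inl ⟨iv, je, rfl, rfl, h⟩
  loopless := by
    refine ⟨?_⟩
    rintro x (⟨iv, je, h1, h2, _⟩ | ⟨iv, je, h1, h2, _⟩) <;> subst h1 <;> simp_all

open scoped Classical in
/-- The Randić matrix of a graph: entry `1/√(deg u · deg v)` when `u ~ v`, else `0`. -/
def randicMatrix {W : Type} (H : SimpleGraph W) : Matrix W W ℝ :=
  fun u v =>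
    if H.Adj u v then
      1 / Real.sqrt ((Nat.card (H.neighborSet u) * Nat.card (H.neighborSet v) : ℕ) : ℝ)
    else 0

/-- `H` has no isolated vertices. -/
def NoIsolated {W : Type} (H : SimpleGraph W) : Prop := ∀ v, ∃ u, H.Adj v u

/-- The matrix `B` used in the construction of `F₁^m(G)`: all entries `1`
except `B(1,1) = 0` and `B(i, m+1-i) = 0` for `2 ≤ i ≤ m-1` (1-based indexing). -/
def Bmat (m : ℕ) : Matrix (Fin m) (Fin m) ℝ :=
  fun i j =>
    if (i.val = 0 ∧ j.val = 0) ∨ (i.val ≠ 0 ∧ j.val ≠ 0 ∧ i.val + j.val = m - 1) then 0 else 1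

lemma Bmat_symm (m : ℕ) (i j : Fin m) : Bmat m i j = Bmat m j i := by
  unfold Bmat
  by_cases h : (i.val = 0 ∧ j.val = 0) ∨ (i.val ≠ 0 ∧ j.val ≠ 0 ∧ i.val + j.val = m - 1)
  · rw [if_pos h, if_pos (by omega)]
  · rw [if_neg h, if_neg (by omega)]

/-- The graph `F₁^m(G)`: `(i,u) ~ (j,v)` iff `B(i,j) = 1` and `u ~ v` in `G`. -/
def F1Graph {V : Type} (m : ℕ) (G : SimpleGraph V) : SimpleGraph (Fin m × V) where
  Adj x y := Bmat m x.1 y.1 = 1 ∧ G.Adj x.2 y.2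
  symm := by
    refine ⟨?_⟩
    rintro x y ⟨hb, ha⟩
    refine ⟨?_, ha.symm⟩
    rw [Bmat_symm]; exact hb
  loopless := ⟨fun x h => G.loopless.irrefl x.2 h.2⟩

/-- The matrix `H` used in the construction of `F₂^m(G)`: all entries `1`
except `H(i,i) = 0` for `2 ≤ i ≤ m` (1-based indexing). -/
def HmatF2 (m : ℕ) : Matrix (Fin m) (Fin m) ℝ :=
  fun i j => if i.val = j.val ∧ i.val ≠ 0 then 0 else 1

lemma HmatF2_symm (m : ℕ) (i j : Fin m) : HmatF2 m i j = HmatF2 m j i := by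
  unfold HmatF2
  by_cases h : i.val = j.val ∧ i.val ≠ 0
  · rw [if_pos h, if_pos (by omega)]
  · rw [if_neg h, if_neg (by omega)]

/-- The graph `F₂^m(G)`: `(i,u) ~ (j,v)` iff `H(i,j) = 1` and `u ~ v` in `G`. -/
def F2Graph {V : Type} (m : ℕ) (G : SimpleGraph V) : SimpleGraph (Fin m × V) where
  Adj x y := HmatF2 m x.1 y.1 = 1 ∧ G.Adj x.2 y.2
  symm := by
    refine ⟨?_⟩
    rintro x y ⟨hb, ha⟩
    refine ⟨?_, ha.symm⟩
    rw [HmatF2_symm]; exact hb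
  loopless := ⟨fun x h => G.loopless.irrefl x.2 h.2⟩

/-- The tensor (Kronecker) product of simple graphs. -/
def tensorGraph {W U : Type} (H : SimpleGraph W) (G : SimpleGraph U) :
    SimpleGraph (W × U) where
  Adj x y := H.Adj x.1 y.1 ∧ G.Adj x.2 y.2
  symm := ⟨fun _ _ h => ⟨h.1.symm, h.2.symm⟩⟩
  loopless := ⟨fun x h => H.loopless.irrefl x.1 h.1⟩

namespace Stmt6Aux

variable {V : Type} [Fintype V] [DecidableEq V] (G : SimpleGraph V) [DecidableRel G.Adj]

/-- Replication map from small space to big space, with scaling `c` on the edge part. -/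
def Phi (n t : ℕ) (c : ℝ) :
    ((V ⊕ G.edgeSet) → ℝ) →ₗ[ℝ] (((Fin (n + 1) × V) ⊕ (Fin (t + 1) × G.edgeSet)) → ℝ) where
  toFun w := Sum.elim (fun iv => w (Sum.inl iv.2)) (fun je => c * w (Sum.inr je.2))
  map_add' w₁ w₂ := by funext x; cases x <;> simp [mul_add]
  map_smul' r w := by funext x; cases x <;> simp [smul_eq_mul] <;> ring

/-- Summing map from big space to small space. -/
def Qmap (n t : ℕ) :
    (((Fin (n + 1) × V) ⊕ (Fin (t + 1) × G.edgeSet)) → ℝ) →ₗ[ℝ] ((V ⊕ G.edgeSet) → ℝ) where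
  toFun z := Sum.elim (fun v => ∑ i : Fin (n + 1), z (Sum.inl (i, v)))
    (fun e => ∑ j : Fin (t + 1), z (Sum.inr (j, e)))
  map_add' z₁ z₂ := by funext x; cases x <;> simp [Finset.sum_add_distrib]
  map_smul' r z := by funext x; cases x <;> simp [Finset.mul_sum]

lemma AS_mulVec_inl (w : (V ⊕ G.edgeSet) → ℝ) (v : V) :
    (AS G).mulVec w (Sum.inl v) =
      ∑ e : G.edgeSet, incid G v e * w (Sum.inr e) := by
  simp [Matrix.mulVec, dotProduct, Fintype.sum_sum_type, AS, Matrix.fromBlocks]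

lemma AS_mulVec_inr (w : (V ⊕ G.edgeSet) → ℝ) (e : G.edgeSet) :
    (AS G).mulVec w (Sum.inr e) =
      ∑ v : V, incid G v e * w (Sum.inl v) := by
  simp [Matrix.mulVec, dotProduct, Fintype.sum_sum_type, AS, Matrix.fromBlocks,
    Matrix.transpose_apply]

lemma AStn_mulVec_inl (n t : ℕ)
    (z : ((Fin (n + 1) × V) ⊕ (Fin (t + 1) × G.edgeSet)) → ℝ) (i : Fin (n + 1)) (v : V) :
    (AStn G n t).mulVec z (Sum.inl (i, v)) =
      ∑ e : G.edgeSet, incid G v e * ∑ j : Fin (t + 1), z (Sum.inr (j, e)) := by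
  rw [eq_comm]
  simp only [Matrix.mulVec, dotProduct, Fintype.sum_sum_type, AStn, Fintype.sum_prod_type,
    Finset.mul_sum]
  rw [Finset.sum_comm]
  simp [incid]

lemma AStn_mulVec_inr (n t : ℕ)
    (z : ((Fin (n + 1) × V) ⊕ (Fin (t + 1) × G.edgeSet)) → ℝ) (j : Fin (t + 1))
    (e : G.edgeSet) :
    (AStn G n t).mulVec z (Sum.inr (j, e)) =
      ∑ v : V, incid G v e * ∑ i : Fin (n + 1), z (Sum.inl (i, v)) := by
  rw [eq_comm]
  simp only [Matrix.mulVec, dotProduct, Fintype.sum_sum_type, AStn, Fintype.sum_prod_type,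
    Finset.mul_sum]
  rw [Finset.sum_comm]
  simp [incid]

lemma mem_ker_iff {m : Type} [Fintype m] [DecidableEq m] (M : Matrix m m ℝ) (μ : ℝ)
    (z : m → ℝ) :
    z ∈ LinearMap.ker (Matrix.toLin' (M - μ • (1 : Matrix m m ℝ))) ↔
      ∀ x, M.mulVec z x = μ * z x := by
  rw [LinearMap.mem_ker, Matrix.toLin'_apply, Matrix.sub_mulVec, sub_eq_zero,
    Matrix.smul_mulVec, Matrix.one_mulVec]
  constructor
  · intro h x; exact congrFun h x
  · intro h; funext x; exact h x

lemma Phi_injective (n t : ℕ) {c : ℝ} (hc : c ≠ 0) : Function.Injective (Phi G n t c) := by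
  intro w₁ w₂ h
  funext x
  cases x with
  | inl v =>
      have := congrFun h (Sum.inl ((0 : Fin (n + 1)), v))
      simpa [Phi] using this
  | inr e =>
      have := congrFun h (Sum.inr ((0 : Fin (t + 1)), e))
      simp only [Phi, LinearMap.coe_mk, AddHom.coe_mk, Sum.elim_inr] at this
      exact mul_left_cancel₀ hc this

lemma Qmap_surjective (n t : ℕ) : Function.Surjective (Qmap G n t) := by
  intro w
  have hn : ((n : ℝ) + 1) ≠ 0 := by positivity
  have ht : ((t : ℝ) + 1) ≠ 0 := by positivity
  refine ⟨Sum.elim (fun iv => w (Sum.inl iv.2) / ((n : ℝ) + 1))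
    (fun je => w (Sum.inr je.2) / ((t : ℝ) + 1)), ?_⟩
  funext x
  cases x with
  | inl v =>
      simp only [Qmap, LinearMap.coe_mk, AddHom.coe_mk, Sum.elim_inl,
        Finset.sum_const, Finset.card_univ, Fintype.card_fin, nsmul_eq_mul]
      push_cast
      field_simp
  | inr e =>
      simp only [Qmap, LinearMap.coe_mk, AddHom.coe_mk, Sum.elim_inr,
        Finset.sum_const, Finset.card_univ, Fintype.card_fin, nsmul_eq_mul]
      push_cast
      field_simp

lemma AStn_factor (n t : ℕ) :
    (AStn G n t).mulVecLin = (Phi G n t 1) ∘ₗ ((AS G).mulVecLin ∘ₗ Qmap G n t) := by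
  apply LinearMap.ext; intro z
  funext x
  cases x with
  | inl iv =>
      obtain ⟨i, v⟩ := iv
      simp [Matrix.mulVecLin_apply, AStn_mulVec_inl, Phi, AS_mulVec_inl, Qmap]
  | inr je =>
      obtain ⟨j, e⟩ := je
      simp [Matrix.mulVecLin_apply, AStn_mulVec_inr, Phi, AS_mulVec_inr, Qmap]

lemma rank_AStn (n t : ℕ) : (AStn G n t).rank = (AS G).rank := by
  rw [Matrix.rank, Matrix.rank, AStn_factor, LinearMap.range_comp,
    LinearMap.range_comp_of_range_eq_top _
      (LinearMap.range_eq_top.mpr (Qmap_surjective G n t))]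
  exact ((Submodule.equivMapOfInjective _ (Phi_injective G n t one_ne_zero) _).finrank_eq).symm

lemma toLin'_eq {m : Type} [Fintype m] [DecidableEq m] (M : Matrix m m ℝ) :
    Matrix.toLin' M = M.mulVecLin := by
  apply LinearMap.ext; intro z
  simp [Matrix.toLin'_apply]

lemma ker_eq (n t : ℕ) (τ : ℝ) (hτ : τ ≠ 0) :
    LinearMap.ker (Matrix.toLin' (AStn G n t -
        (Real.sqrt (((t : ℝ) + 1) * ((n : ℝ) + 1)) * τ) • 1)) =
      (LinearMap.ker (Matrix.toLin' (AS G - τ • 1))).map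
        (Phi G n t (Real.sqrt ((n : ℝ) + 1) / Real.sqrt ((t : ℝ) + 1))) := by
  set s := Real.sqrt ((t : ℝ) + 1) with hsdef
  set r := Real.sqrt ((n : ℝ) + 1) with hrdef
  have hs : (0 : ℝ) < s := Real.sqrt_pos.mpr (by positivity)
  have hr : (0 : ℝ) < r := Real.sqrt_pos.mpr (by positivity)
  have hss : s * s = (t : ℝ) + 1 := Real.mul_self_sqrt (by positivity)
  have hrr : r * r = (n : ℝ) + 1 := Real.mul_self_sqrt (by positivity)
  have hsqrt : Real.sqrt (((t : ℝ) + 1) * ((n : ℝ) + 1)) = s * r :=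
    Real.sqrt_mul (by positivity) _
  set c := r / s with hcdef
  have hc : c ≠ 0 := by positivity
  set μ := s * r * τ with hμdef
  have hμ : μ ≠ 0 := by
    simp only [hμdef]
    exact mul_ne_zero (mul_ne_zero hs.ne' hr.ne') hτ
  rw [hsqrt, ← hμdef]
  ext z
  rw [mem_ker_iff, Submodule.mem_map]
  constructor
  · intro hz
    have hvert : ∀ (i : Fin (n + 1)) (v : V), z (Sum.inl (i, v)) = z (Sum.inl (0, v)) := by
      intro i v
      have h1 := hz (Sum.inl (i, v)); have h2 := hz (Sum.inl (0, v))
      rw [AStn_mulVec_inl] at h1 h2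
      exact mul_left_cancel₀ hμ (h1.symm.trans h2)
    have hedge : ∀ (j : Fin (t + 1)) (e : G.edgeSet),
        z (Sum.inr (j, e)) = z (Sum.inr (0, e)) := by
      intro j e
      have h1 := hz (Sum.inr (j, e)); have h2 := hz (Sum.inr (0, e))
      rw [AStn_mulVec_inr] at h1 h2
      exact mul_left_cancel₀ hμ (h1.symm.trans h2)
    refine ⟨Sum.elim (fun v => z (Sum.inl (0, v))) (fun e => z (Sum.inr (0, e)) / c),
      ?_, ?_⟩
    · rw [mem_ker_iff]
      intro x
      cases x with
      | inl v =>
          have h1 := hz (Sum.inl (0, v))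
          rw [AStn_mulVec_inl] at h1
          have hsum : ∀ e : G.edgeSet,
              ∑ j : Fin (t + 1), z (Sum.inr (j, e)) = ((t : ℝ) + 1) * z (Sum.inr (0, e)) := by
            intro e
            rw [Finset.sum_congr rfl fun j _ => hedge j e]
            simp [Finset.sum_const, Fintype.card_fin]
          rw [AS_mulVec_inl]
          simp only [Sum.elim_inl, Sum.elim_inr]
          have e1 : ∑ e : G.edgeSet, incid G v e * ∑ j : Fin (t + 1), z (Sum.inr (j, e))
              = ((t : ℝ) + 1) * ∑ e : G.edgeSet, incid G v e * z (Sum.inr (0, e)) := by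
            rw [Finset.mul_sum]
            refine Finset.sum_congr rfl fun e _ => ?_
            rw [hsum e]; ring
          rw [e1] at h1
          have e2 : ∑ e : G.edgeSet, incid G v e * (z (Sum.inr (0, e)) / c)
              = (∑ e : G.edgeSet, incid G v e * z (Sum.inr (0, e))) / c := by
            rw [Finset.sum_div]
            exact Finset.sum_congr rfl fun e _ => (mul_div_assoc _ _ _).symm
          rw [e2]
          have hA : ∑ e : G.edgeSet, incid G v e * z (Sum.inr (0, e))
              = μ * z (Sum.inl (0, v)) / ((t : ℝ) + 1) := by
            field_simp
            linarith [h1]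
          rw [hA, hμdef, ← hss, hcdef]
          field_simp
      | inr e =>
          have h1 := hz (Sum.inr (0, e))
          rw [AStn_mulVec_inr] at h1
          have hsum : ∀ v : V,
              ∑ i : Fin (n + 1), z (Sum.inl (i, v)) = ((n : ℝ) + 1) * z (Sum.inl (0, v)) := by
            intro v
            rw [Finset.sum_congr rfl fun i _ => hvert i v]
            simp [Finset.sum_const, Fintype.card_fin]
          rw [AS_mulVec_inr]
          simp only [Sum.elim_inl, Sum.elim_inr]
          have e1 : ∑ v : V, incid G v e * ∑ i : Fin (n + 1), z (Sum.inl (i, v))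
              = ((n : ℝ) + 1) * ∑ v : V, incid G v e * z (Sum.inl (0, v)) := by
            rw [Finset.mul_sum]
            refine Finset.sum_congr rfl fun v _ => ?_
            rw [hsum v]; ring
          rw [e1] at h1
          have hA : ∑ v : V, incid G v e * z (Sum.inl (0, v))
              = μ * z (Sum.inr (0, e)) / ((n : ℝ) + 1) := by
            field_simp
            linarith [h1]
          rw [hA, hμdef, ← hrr, hcdef]
          field_simp
    · funext x
      cases x with
      | inl iv =>
          simp only [Phi, LinearMap.coe_mk, AddHom.coe_mk, Sum.elim_inl]
          exact (hvert iv.1 iv.2).symm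
      | inr je =>
          simp only [Phi, LinearMap.coe_mk, AddHom.coe_mk, Sum.elim_inr]
          rw [mul_div_cancel₀ _ hc]
          exact (hedge je.1 je.2).symm
  · rintro ⟨w, hw, rfl⟩
    rw [mem_ker_iff] at hw
    intro x
    cases x with
    | inl iv =>
        obtain ⟨i, v⟩ := iv
        rw [AStn_mulVec_inl]
        have h1 := hw (Sum.inl v)
        rw [AS_mulVec_inl] at h1
        simp only [Phi, LinearMap.coe_mk, AddHom.coe_mk, Sum.elim_inl, Sum.elim_inr]
        have e1 : ∑ e : G.edgeSet, incid G v e * ∑ _j : Fin (t + 1), c * w (Sum.inr e)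
            = (((t : ℝ) + 1) * c) * ∑ e : G.edgeSet, incid G v e * w (Sum.inr e) := by
          rw [Finset.mul_sum]
          refine Finset.sum_congr rfl fun e _ => ?_
          simp [Finset.sum_const, Fintype.card_fin]
          push_cast; ring
        rw [e1, h1, hμdef, ← hss, hcdef]
        field_simp
    | inr je =>
        obtain ⟨j, e⟩ := je
        rw [AStn_mulVec_inr]
        have h1 := hw (Sum.inr e)
        rw [AS_mulVec_inr] at h1
        simp only [Phi, LinearMap.coe_mk, AddHom.coe_mk, Sum.elim_inl, Sum.elim_inr]
        have e1 : ∑ v : V, incid G v e * ∑ _i : Fin (n + 1), w (Sum.inl v)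
            = ((n : ℝ) + 1) * ∑ v : V, incid G v e * w (Sum.inl v) := by
          rw [Finset.mul_sum]
          refine Finset.sum_congr rfl fun v _ => ?_
          simp [Finset.sum_const, Fintype.card_fin]
          push_cast; ring
        rw [e1, h1, hμdef, ← hrr, hcdef]
        field_simp

end Stmt6Aux
/-- for `t = n` or `t = n−1`, the multiplicity of `√((t+1)(n+1))·τ` as an
eigenvalue of `A(S(G)_t^n)` equals the multiplicity of `τ` as an eigenvalue of `A(S(G))`,
for every nonzero real `τ`; consequently the multiplicity of `0` as an eigenvalue of
`A(S(G)_t^n)` is `(n+1)p + (t+1)q − 2r` where `2r = rank A(S(G))`. -/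
theorem stmt_6 (V : Type) [Fintype V] [DecidableEq V] (G : SimpleGraph V) [DecidableRel G.Adj]
    (n t : ℕ) (hn : 1 ≤ n) (ht : t = n ∨ t = n - 1) :
    (∀ τ : ℝ, τ ≠ 0 →
        eigMult (AStn G n t) (Real.sqrt (((t : ℝ) + 1) * ((n : ℝ) + 1)) * τ) =
          eigMult (AS G) τ) ∧
    eigMult (AStn G n t) 0 =
      (n + 1) * Fintype.card V + (t + 1) * Fintype.card G.edgeSet - (AS G).rank := by
  constructor
  · intro τ hτ
    unfold eigMult
    rw [Stmt6Aux.ker_eq G n t τ hτ]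
    have hc : Real.sqrt ((n : ℝ) + 1) / Real.sqrt ((t : ℝ) + 1) ≠ 0 := by
      have h1 : (0 : ℝ) < Real.sqrt ((n : ℝ) + 1) := Real.sqrt_pos.mpr (by positivity)
      have h2 : (0 : ℝ) < Real.sqrt ((t : ℝ) + 1) := Real.sqrt_pos.mpr (by positivity)
      positivity
    exact ((Submodule.equivMapOfInjective _ (Stmt6Aux.Phi_injective G n t hc) _).finrank_eq).symm
  · unfold eigMult
    have h0 : AStn G n t - (0 : ℝ) • (1 : Matrix _ _ ℝ) = AStn G n t := by simp
    rw [h0, Stmt6Aux.toLin'_eq]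
    have hrn := LinearMap.finrank_range_add_finrank_ker ((AStn G n t).mulVecLin)
    rw [Module.finrank_pi] at hrn
    have hcard : Fintype.card ((Fin (n + 1) × V) ⊕ (Fin (t + 1) × G.edgeSet)) =
        (n + 1) * Fintype.card V + (t + 1) * Fintype.card G.edgeSet := by
      rw [Fintype.card_sum, Fintype.card_prod, Fintype.card_prod, Fintype.card_fin,
        Fintype.card_fin]
    have hrank : Module.finrank ℝ (LinearMap.range (AStn G n t).mulVecLin) = (AS G).rank := by
      rw [show Module.finrank ℝ (LinearMap.range (AStn G n t).mulVecLin) = (AStn G n t).rank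
        from rfl]
      exact Stmt6Aux.rank_AStn G n t
    omega

end
end

section
/- Let G be a finite simple graph such that every eigenvalue of the adjacency matrix of S(G) is an integer, and let n ≥ 1 be an integer. Then every eigenvalue of the adjacency matrix of S(G)_n^n is an integer. -/
open Matrix

noncomputable section

/-- if every eigenvalue of `A(S(G))` is an integer and `n ≥ 1`, then every
eigenvalue of `A(S(G)_n^n)` is an integer. -/
theorem stmt_8 (V : Type) [Fintype V] [DecidableEq V] (G : SimpleGraph V) [DecidableRel G.Adj]
    (hint : ∀ μ : ℝ, 0 < eigMult (AS G) μ → ∃ z : ℤ, μ = (z : ℝ))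
    (n : ℕ) (hn : 1 ≤ n) :
    ∀ μ : ℝ, 0 < eigMult (AStn G n n) μ → ∃ z : ℤ, μ = (z : ℝ) := by
  classical
  intro μ hμ
  rw [eigMult] at hμ
  haveI := Module.finrank_pos_iff.mp hμ
  obtain ⟨⟨x, hxmem⟩, hxne⟩ :=
    exists_ne (0 : LinearMap.ker (Matrix.toLin'
      (AStn G n n - μ • (1 : Matrix _ _ ℝ))))
  have hx0 : x ≠ 0 := fun h => hxne (Subtype.ext h)
  have hx' : ∀ z, (AStn G n n).mulVec x z = μ * x z := by
    have h := hxmem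
    rw [LinearMap.mem_ker, Matrix.toLin'_apply, Matrix.sub_mulVec,
      Matrix.smul_mulVec, Matrix.one_mulVec, sub_eq_zero] at h
    intro z; rw [h]; rfl
  set y : (V ⊕ G.edgeSet) → ℝ :=
    Sum.elim (fun v => ∑ i : Fin (n+1), x (Sum.inl (i, v)))
             (fun e => ∑ j : Fin (n+1), x (Sum.inr (j, e))) with hy
  have key1 : ∀ (i : Fin (n+1)) (v : V),
      (AStn G n n).mulVec x (Sum.inl (i, v)) = (AS G).mulVec y (Sum.inl v) := by
    intro i v
    simp only [Matrix.mulVec, dotProduct, Fintype.sum_sum_type,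
      Fintype.sum_prod_type, AStn, AS, Matrix.fromBlocks_apply₁₁,
      Matrix.fromBlocks_apply₁₂, Matrix.zero_apply, zero_mul,
      Finset.sum_const_zero, zero_add, hy, Sum.elim_inr, incid]
    rw [Finset.sum_comm]
    simp [Finset.mul_sum]
  have key2 : ∀ (j : Fin (n+1)) (e : G.edgeSet),
      (AStn G n n).mulVec x (Sum.inr (j, e)) = (AS G).mulVec y (Sum.inr e) := by
    intro j e
    simp only [Matrix.mulVec, dotProduct, Fintype.sum_sum_type,
      Fintype.sum_prod_type, AStn, AS, Matrix.fromBlocks_apply₂₁,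
      Matrix.fromBlocks_apply₂₂, Matrix.zero_apply, zero_mul,
      Finset.sum_const_zero, add_zero, hy, Sum.elim_inl, incid, Matrix.transpose_apply]
    rw [Finset.sum_comm]
    simp [Finset.mul_sum]
  have hAsy : ∀ w, ((n : ℝ) + 1) * (AS G).mulVec y w = μ * y w := by
    rintro (v | e)
    · have : μ * y (Sum.inl v) = ∑ i : Fin (n+1), (AS G).mulVec y (Sum.inl v) := by
        simp only [hy, Sum.elim_inl, Finset.mul_sum]
        exact Finset.sum_congr rfl fun i _ => by rw [← hx', key1]
      rw [this, Finset.sum_const, Finset.card_univ, Fintype.card_fin,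
        nsmul_eq_mul]
      push_cast; ring
    · have : μ * y (Sum.inr e) = ∑ j : Fin (n+1), (AS G).mulVec y (Sum.inr e) := by
        simp only [hy, Sum.elim_inr, Finset.mul_sum]
        exact Finset.sum_congr rfl fun j _ => by rw [← hx', key2]
      rw [this, Finset.sum_const, Finset.card_univ, Fintype.card_fin,
        nsmul_eq_mul]
      push_cast; ring
  have hn1 : ((n : ℝ) + 1) ≠ 0 := by positivity
  by_cases hy0 : y = 0
  · -- then AS.mulVec y = 0, so μ * x z = 0 for all z, hence μ = 0
    have hz : ∀ z, μ * x z = 0 := by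
      rintro (⟨i, v⟩ | ⟨j, e⟩)
      · rw [← hx', key1, hy0, Matrix.mulVec_zero]; rfl
      · rw [← hx', key2, hy0, Matrix.mulVec_zero]; rfl
    rcases Function.ne_iff.mp hx0 with ⟨z, hzne⟩
    have : μ = 0 := by
      have := hz z
      rcases mul_eq_zero.mp this with h | h
      · exact h
      · exact absurd h (by simpa using hzne)
    exact ⟨0, by simp [this]⟩
  · -- y is an eigenvector of AS G with eigenvalue μ/(n+1)
    have heig : (AS G).mulVec y = (μ / ((n : ℝ) + 1)) • y := by
      funext w
      have := hAsy w
      simp only [Pi.smul_apply, smul_eq_mul]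
      field_simp
      linarith [this]
    have hmem : y ∈ LinearMap.ker (Matrix.toLin'
        (AS G - (μ / ((n : ℝ) + 1)) • (1 : Matrix _ _ ℝ))) := by
      rw [LinearMap.mem_ker, Matrix.toLin'_apply, Matrix.sub_mulVec,
        Matrix.smul_mulVec, Matrix.one_mulVec, sub_eq_zero]
      exact heig
    have hpos : 0 < eigMult (AS G) (μ / ((n : ℝ) + 1)) := by
      rw [eigMult]
      rw [Module.finrank_pos_iff]
      exact nontrivial_of_ne ⟨y, hmem⟩ 0 (by simpa using hy0)
    obtain ⟨z, hzeq⟩ := hint _ hpos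
    refine ⟨((n : ℤ) + 1) * z, ?_⟩
    have : μ = ((n : ℝ) + 1) * (z : ℝ) := by
      field_simp at hzeq
      linarith [hzeq]
    rw [this]; push_cast; ring

end
end

section
/- Let G be a finite simple graph with no isolated vertices, let n ≥ 1 be an integer, and let t = n or t = n − 1. Then ε_R(S(G)_t^n) = ε_R(S(G)), where ε_R denotes Randić energy. -/
open Matrix

noncomputable section

open Polynomial
open scoped Kronecker

/-- Householder-type vector. -/
def hhw (m : ℕ) : Fin (m+1) → ℝ := fun i => (if i = 0 then 1 else 0) - 1 / Real.sqrt (m+1)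

/-- Householder-type orthogonal symmetric matrix whose column sums are `(√(m+1), 0, …, 0)`. -/
def hh (m : ℕ) : Matrix (Fin (m+1)) (Fin (m+1)) ℝ :=
  1 - (2 / (∑ i, hhw m i ^ 2)) • Matrix.vecMulVec (hhw m) (hhw m)

lemma sqrtM_pos (m : ℕ) : 0 < Real.sqrt (m+1) := by
  apply Real.sqrt_pos.mpr; positivity

lemma hhw_sum (m : ℕ) : ∑ i, hhw m i = 1 - Real.sqrt (m+1) := by
  unfold hhw
  rw [Finset.sum_sub_distrib]
  rw [Finset.sum_ite_eq' Finset.univ (0 : Fin (m+1)) (fun _ => (1:ℝ))]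
  simp only [Finset.mem_univ, if_true, Finset.sum_const, Finset.card_univ, Fintype.card_fin,
    nsmul_eq_mul]
  congr 1
  push_cast
  rw [mul_one_div, div_eq_iff (by positivity : Real.sqrt ((m:ℝ)+1) ≠ 0),
    Real.mul_self_sqrt (by positivity)]

lemma hhw_sumsq (m : ℕ) : ∑ i, hhw m i ^ 2 = 2 - 2 / Real.sqrt (m+1) := by
  have hs : Real.sqrt ((m:ℝ)+1) * Real.sqrt ((m:ℝ)+1) = (m:ℝ)+1 :=
    Real.mul_self_sqrt (by positivity)
  have h0 : Real.sqrt ((m:ℝ)+1) ≠ 0 := by positivity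
  unfold hhw
  have : ∀ i : Fin (m+1), ((if i = 0 then (1:ℝ) else 0) - 1 / Real.sqrt (m+1)) ^ 2
      = (if i = 0 then (1:ℝ) else 0) - 2 / Real.sqrt (m+1) * (if i = 0 then (1:ℝ) else 0)
        + (1 / Real.sqrt (m+1)) ^ 2 := by
    intro i; split_ifs <;> ring
  rw [Finset.sum_congr rfl (fun i _ => this i)]
  rw [Finset.sum_add_distrib, Finset.sum_sub_distrib]
  rw [Finset.sum_ite_eq' Finset.univ (0 : Fin (m+1)) (fun _ => (1:ℝ))]
  rw [← Finset.mul_sum, Finset.sum_ite_eq' Finset.univ (0 : Fin (m+1)) (fun _ => (1:ℝ))]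
  simp only [Finset.mem_univ, if_true, Finset.sum_const, Finset.card_univ, Fintype.card_fin,
    nsmul_eq_mul]
  push_cast
  field_simp
  linear_combination (-1:ℝ) * hs

lemma hh_transpose (m : ℕ) : (hh m)ᵀ = hh m := by
  unfold hh
  rw [transpose_sub, transpose_one, transpose_smul]
  congr 1
  ext i j
  simp [vecMulVec_apply, mul_comm]

lemma hhw_dot (m : ℕ) : hhw m ⬝ᵥ hhw m = ∑ i, hhw m i ^ 2 := by
  simp [dotProduct, pow_two]

lemma vecMulVec_sq (m : ℕ) (w : Fin m → ℝ) :
    Matrix.vecMulVec w w * Matrix.vecMulVec w w = (∑ i, w i ^ 2) • Matrix.vecMulVec w w := by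
  ext i j
  simp only [mul_apply, vecMulVec_apply, Matrix.smul_apply, smul_eq_mul]
  have : ∀ l : Fin m, w i * w l * (w l * w j) = w l ^ 2 * (w i * w j) := by intro l; ring
  rw [Finset.sum_congr rfl (fun l _ => this l), ← Finset.sum_mul]

lemma hh_mul_self (m : ℕ) : hh m * hh m = 1 := by
  by_cases hk : ∑ i, hhw m i ^ 2 = 0
  · have hw : ∀ i, hhw m i = 0 := by
      intro i
      have := Finset.sum_eq_zero_iff_of_nonneg (fun j _ => sq_nonneg (hhw m j)) |>.mp hk i
        (Finset.mem_univ i)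
      exact pow_eq_zero_iff (by norm_num) |>.mp this
    have : Matrix.vecMulVec (hhw m) (hhw m) = 0 := by
      ext i j; simp [vecMulVec_apply, hw]
    unfold hh
    rw [this, smul_zero, sub_zero, one_mul]
  · unfold hh
    rw [sub_mul, one_mul, mul_sub, mul_one, smul_mul_assoc, mul_smul_comm,
      vecMulVec_sq]
    set k := ∑ i, hhw m i ^ 2
    rw [smul_smul, smul_smul]
    have : 2 / k * (2 / k) * k = 2 / k + 2 / k := by field_simp; ring
    rw [this]
    module

lemma hh_colsum (m : ℕ) (j : Fin (m+1)) :
    ∑ i, hh m i j = if j = 0 then Real.sqrt (m+1) else 0 := by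
  have hs : Real.sqrt ((m:ℝ)+1) * Real.sqrt ((m:ℝ)+1) = (m:ℝ)+1 :=
    Real.mul_self_sqrt (by positivity)
  have h0 : Real.sqrt ((m:ℝ)+1) ≠ 0 := by positivity
  unfold hh
  simp only [Matrix.sub_apply, Matrix.smul_apply, vecMulVec_apply, smul_eq_mul]
  rw [Finset.sum_sub_distrib]
  have h1 : ∑ i, (1 : Matrix (Fin (m+1)) (Fin (m+1)) ℝ) i j = 1 := by
    simp [Matrix.one_apply]
  rw [h1]
  have h2 : ∑ x, (2 / ∑ i, hhw m i ^ 2) * (hhw m x * hhw m j)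
      = ((2 / ∑ i, hhw m i ^ 2) * hhw m j) * ∑ x, hhw m x := by
    rw [Finset.mul_sum]
    exact Finset.sum_congr rfl (fun x _ => by ring)
  rw [h2, hhw_sum, hhw_sumsq]
  set s := Real.sqrt ((m:ℝ)+1) with hsdef
  by_cases hc : s = 1
  · have hm : (m:ℝ) = 0 := by nlinarith
    have hm0 : m = 0 := by exact_mod_cast hm
    subst hm0
    have hj : j = 0 := Fin.ext (by have := j.isLt; omega)
    subst hj
    rw [if_pos rfl]
    unfold hhw
    simp only [if_pos rfl]
    rw [← hsdef, hc]
    norm_num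
  · have hs1 : (1:ℝ) ≤ s := by
      have h := Real.sqrt_le_sqrt (show (1:ℝ) ≤ (m:ℝ)+1 by push_cast; linarith)
      simp only [Real.sqrt_one] at h
      rw [hsdef]
      simpa using h
    have h3 : 2 - 2 / s ≠ 0 := by
      intro h
      apply hc
      field_simp at h
      linarith
    have h4 : s - 1 ≠ 0 := fun h => hc (by linarith [sub_eq_zero.mp h])
    have e1 : 2 / (2 - 2/s) = s / (s-1) := by
      rw [div_eq_div_iff h3 h4]
      field_simp
    unfold hhw
    rw [← hsdef, e1]
    split_ifs with hj <;> field_simp <;> ring_nf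

/-- All-ones rectangular matrix. -/
def Jones (a b : ℕ) : Matrix (Fin (a+1)) (Fin (b+1)) ℝ := fun _ _ => 1

/-- The `E₀₀` rectangular matrix. -/
def E00 (a b : ℕ) : Matrix (Fin (a+1)) (Fin (b+1)) ℝ :=
  fun i j => if i = 0 ∧ j = 0 then 1 else 0

lemma hh_conj_ones (a b : ℕ) :
    (hh a)ᵀ * Jones a b * hh b = Real.sqrt ((a+1)*(b+1)) • E00 a b := by
  ext j j'
  rw [Matrix.mul_apply]
  have : ∀ i', ((hh a)ᵀ * Jones a b) j i' * hh b i' j'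
      = (∑ i, hh a i j) * hh b i' j' := by
    intro i'
    rw [Matrix.mul_apply]
    congr 1
    exact Finset.sum_congr rfl (fun i _ => by simp [Jones, Matrix.transpose_apply])
  rw [Finset.sum_congr rfl (fun i' _ => this i'), ← Finset.mul_sum, hh_colsum, hh_colsum]
  rw [Matrix.smul_apply, E00]
  have hab : Real.sqrt (((a:ℝ)+1)*((b:ℝ)+1)) = Real.sqrt ((a:ℝ)+1) * Real.sqrt ((b:ℝ)+1) :=
    Real.sqrt_mul (by positivity) _
  push_cast
  rw [hab]
  split_ifs with h1 h2 h3 <;> simp_all <;> ring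

section CharpolyAux

variable {m : Type} [Fintype m] [DecidableEq m]

lemma charpoly_conj (Q M : Matrix m m ℝ) (hQ : Q * Qᵀ = 1) :
    (Qᵀ * M * Q).charpoly = M.charpoly := by
  have hQ' : Qᵀ * Q = 1 := mul_eq_one_comm.mp hQ
  set P : Matrix m m ℝ[X] := Q.map (C : ℝ →+* ℝ[X]) with hP
  have hdiag : Matrix.diagonal (fun _ : m => (X : ℝ[X])) = (X : ℝ[X]) • 1 := by
    ext i j
    by_cases h : i = j <;> simp [Matrix.diagonal_apply, Matrix.one_apply, h]
  have hPP : Pᵀ * P = 1 := by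
    rw [hP, ← Matrix.transpose_map, ← Matrix.map_mul, hQ', Matrix.map_one _ (map_zero C) (map_one C)]
  have key : charmatrix (Qᵀ * M * Q) = Pᵀ * charmatrix M * P := by
    have h1 : charmatrix (Qᵀ * M * Q)
        = Matrix.diagonal (fun _ : m => (X : ℝ[X])) - (Qᵀ * M * Q).map C := by
      ext i j; rw [charmatrix_apply]; simp only [Matrix.sub_apply, Matrix.map_apply]
    have h2 : charmatrix M = Matrix.diagonal (fun _ : m => (X : ℝ[X])) - M.map C := by
      ext i j; rw [charmatrix_apply]; simp only [Matrix.sub_apply, Matrix.map_apply]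
    have h3 : (Qᵀ * M * Q).map (C : ℝ →+* ℝ[X]) = Pᵀ * M.map (C : ℝ →+* ℝ[X]) * P := by
      rw [hP, ← Matrix.transpose_map, ← Matrix.map_mul, ← Matrix.map_mul]
    rw [h1, h2, Matrix.mul_sub, Matrix.sub_mul, h3]
    congr 1
    rw [hdiag, mul_smul_comm, mul_one, smul_mul_assoc, hPP]
  unfold Matrix.charpoly
  rw [key, Matrix.det_mul, Matrix.det_mul]
  have : P.det * Pᵀ.det = 1 := by
    rw [← Matrix.det_mul, mul_eq_one_comm.mp hPP, Matrix.det_one]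
  calc Pᵀ.det * (charmatrix M).det * P.det
      = P.det * Pᵀ.det * (charmatrix M).det := by ring
    _ = (charmatrix M).det := by rw [this, one_mul]

lemma charpoly_diag (f : m → ℝ) :
    (Matrix.diagonal f).charpoly = ∏ i, (X - C (f i)) := by
  unfold Matrix.charpoly
  have : charmatrix (Matrix.diagonal f) = Matrix.diagonal (fun i => X - C (f i)) := by
    ext i j
    by_cases h : i = j
    · subst h; rw [charmatrix_apply_eq, Matrix.diagonal_apply_eq, Matrix.diagonal_apply_eq]
    · rw [charmatrix_apply_ne _ _ _ h, Matrix.diagonal_apply_ne _ h, Matrix.diagonal_apply_ne _ h,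
        map_zero, neg_zero]
  rw [this, Matrix.det_diagonal]

lemma charpoly_zero_mat {r : Type} [Fintype r] [DecidableEq r] :
    (0 : Matrix r r ℝ).charpoly = X ^ (Fintype.card r) := by
  have : (0 : Matrix r r ℝ) = Matrix.diagonal (fun _ => (0:ℝ)) := by simp
  rw [this, charpoly_diag]
  simp [Finset.prod_const, Finset.card_univ]

lemma herm_charpoly {A : Matrix m m ℝ} (hA : A.IsHermitian) :
    A.charpoly = ∏ i, (X - C (hA.eigenvalues i)) := by
  have hst := hA.spectral_theorem
  rw [Unitary.conjStarAlgAut_apply] at hst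
  set U : Matrix m m ℝ := (hA.eigenvectorUnitary : Matrix m m ℝ) with hU
  have hstar : star U = Uᵀ := by
    ext i j; simp [Matrix.star_apply]
  have hmem := hA.eigenvectorUnitary.2
  rw [Unitary.mem_iff] at hmem
  have hUU : Uᵀ * (Uᵀ)ᵀ = 1 := by
    rw [Matrix.transpose_transpose, ← hstar]; exact hmem.1
  have hD : Matrix.diagonal (RCLike.ofReal ∘ hA.eigenvalues) = Matrix.diagonal hA.eigenvalues := by
    simp [RCLike.ofReal_real_eq_id]
  rw [hstar, hD] at hst
  have : A = (Uᵀ)ᵀ * Matrix.diagonal hA.eigenvalues * Uᵀ := by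
    rw [Matrix.transpose_transpose]; exact hst
  conv_lhs => rw [this]
  rw [charpoly_conj _ _ hUU, charpoly_diag]

lemma matEnergy_eq_roots {A : Matrix m m ℝ} (hA : A.IsHermitian) :
    matEnergy A = (A.charpoly.roots.map (fun x => |x|)).sum := by
  rw [matEnergy, dif_pos hA, herm_charpoly hA]
  have h1 : (∏ i, (X - C (hA.eigenvalues i))).roots
      = Finset.univ.val.map hA.eigenvalues := by
    rw [show (∏ i, (X - C (hA.eigenvalues i)))
        = (Multiset.map (fun a => X - C a) (Finset.univ.val.map hA.eigenvalues)).prod by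
      rw [Multiset.map_map]; rfl]
    exact roots_multiset_prod_X_sub_C _
  rw [h1, Multiset.map_map]
  rfl

lemma matEnergy_of_charpoly_mul {m' : Type} [Fintype m'] [DecidableEq m']
    {A : Matrix m m ℝ} {B : Matrix m' m' ℝ} (hA : A.IsHermitian) (hB : B.IsHermitian)
    (d : ℕ) (h : A.charpoly = B.charpoly * X ^ d) : matEnergy A = matEnergy B := by
  rw [matEnergy_eq_roots hA, matEnergy_eq_roots hB, h]
  rw [Polynomial.roots_mul (mul_ne_zero (Matrix.charpoly_monic B).ne_zero
    (pow_ne_zero _ Polynomial.X_ne_zero))]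
  rw [Polynomial.roots_pow, Polynomial.roots_X]
  rw [Multiset.map_add, Multiset.sum_add]
  have : (Multiset.map (fun x : ℝ => |x|) (d • ({0} : Multiset ℝ))).sum = 0 := by
    rw [Multiset.map_nsmul]
    simp [Multiset.nsmul_singleton, Multiset.sum_replicate]
  rw [this, add_zero]

end CharpolyAux


section GraphAux

lemma randic_herm {W : Type} [Fintype W] [DecidableEq W] (H : SimpleGraph W) :
    (randicMatrix H).IsHermitian := by
  ext i j
  simp only [Matrix.conjTranspose_apply, randicMatrix, star_trivial]
  by_cases h : H.Adj i j
  · rw [if_pos h, if_pos h.symm, Nat.mul_comm]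
  · rw [if_neg h, if_neg (fun hc => h hc.symm)]

variable {V : Type} [Fintype V] [DecidableEq V] (G : SimpleGraph V) [DecidableRel G.Adj]

lemma SG_adj_inl_inr (v : V) (e : G.edgeSet) :
    (SGGraph G).Adj (Sum.inl v) (Sum.inr e) ↔ v ∈ (e : Sym2 V) := by
  constructor
  · rintro (⟨w, f, h1, h2, h3⟩ | ⟨w, f, h1, h2, h3⟩)
    · obtain rfl := Sum.inl.inj h1
      obtain rfl := Sum.inr.inj h2
      exact h3
    · exact absurd h1 (by simp)
  · intro h
    exact Or.inl ⟨v, e, rfl, rfl, h⟩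

lemma SG_adj_inr_inl (v : V) (e : G.edgeSet) :
    (SGGraph G).Adj (Sum.inr e) (Sum.inl v) ↔ v ∈ (e : Sym2 V) := by
  rw [SimpleGraph.adj_comm]
  exact SG_adj_inl_inr G v e

lemma SG_adj_inl_inl (v w : V) : ¬ (SGGraph G).Adj (Sum.inl v) (Sum.inl w) := by
  rintro (⟨_, _, _, h2, _⟩ | ⟨_, _, h1, _, _⟩) <;> simp_all

lemma SG_adj_inr_inr (e f : G.edgeSet) : ¬ (SGGraph G).Adj (Sum.inr e) (Sum.inr f) := by
  rintro (⟨_, _, h1, _, _⟩ | ⟨_, _, _, h2, _⟩) <;> simp_all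

lemma SGtn_adj_inl_inr (n t : ℕ) (iv : Fin (n+1) × V) (je : Fin (t+1) × G.edgeSet) :
    (SGtnGraph G n t).Adj (Sum.inl iv) (Sum.inr je) ↔ iv.2 ∈ (je.2 : Sym2 V) := by
  constructor
  · rintro (⟨w, f, h1, h2, h3⟩ | ⟨w, f, h1, h2, h3⟩)
    · obtain rfl := Sum.inl.inj h1
      obtain rfl := Sum.inr.inj h2
      exact h3
    · exact absurd h1 (by simp)
  · intro h
    exact Or.inl ⟨iv, je, rfl, rfl, h⟩

lemma SGtn_adj_inr_inl (n t : ℕ) (iv : Fin (n+1) × V) (je : Fin (t+1) × G.edgeSet) :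
    (SGtnGraph G n t).Adj (Sum.inr je) (Sum.inl iv) ↔ iv.2 ∈ (je.2 : Sym2 V) := by
  rw [SimpleGraph.adj_comm]
  exact SGtn_adj_inl_inr G n t iv je

lemma SGtn_adj_inl_inl (n t : ℕ) (iv iw : Fin (n+1) × V) :
    ¬ (SGtnGraph G n t).Adj (Sum.inl iv) (Sum.inl iw) := by
  rintro (⟨_, _, _, h2, _⟩ | ⟨_, _, h1, _, _⟩) <;> simp_all

lemma SGtn_adj_inr_inr (n t : ℕ) (je jf : Fin (t+1) × G.edgeSet) :
    ¬ (SGtnGraph G n t).Adj (Sum.inr je) (Sum.inr jf) := by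
  rintro (⟨_, _, h1, _, _⟩ | ⟨_, _, _, h2, _⟩) <;> simp_all

/-- vertex-side incidence degree -/
def dve (v : V) : ℕ := Nat.card {e : G.edgeSet // v ∈ (e : Sym2 V)}

/-- edge-side incidence degree -/
def dev (e : G.edgeSet) : ℕ := Nat.card {w : V // w ∈ (e : Sym2 V)}

lemma card_nb_SG_inl (v : V) :
    Nat.card ((SGGraph G).neighborSet (Sum.inl v)) = dve G v := by
  apply Nat.card_congr
  apply Equiv.symm
  refine Equiv.ofBijective
    (fun p => ⟨Sum.inr p.1, Or.inl ⟨v, p.1, rfl, rfl, p.2⟩⟩) ⟨?_, ?_⟩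
  · rintro ⟨e, he⟩ ⟨f, hf⟩ h
    simp only [Subtype.mk.injEq, Sum.inr.injEq] at h
    exact Subtype.ext (Sum.inr.inj (congrArg Subtype.val h))
  · rintro ⟨x, hx⟩
    have hadj : (SGGraph G).Adj (Sum.inl v) x := hx
    rcases hadj with ⟨w, f, h1, h2, h3⟩ | ⟨w, f, h1, h2, h3⟩
    · obtain rfl := Sum.inl.inj h1
      exact ⟨⟨f, h3⟩, Subtype.ext h2.symm⟩
    · exact absurd h1 (by simp)

lemma card_nb_SG_inr (e : G.edgeSet) :
    Nat.card ((SGGraph G).neighborSet (Sum.inr e)) = dev G e := by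
  apply Nat.card_congr
  apply Equiv.symm
  refine Equiv.ofBijective
    (fun p => ⟨Sum.inl p.1, Or.inr ⟨p.1, e, rfl, rfl, p.2⟩⟩) ⟨?_, ?_⟩
  · rintro ⟨w, hw⟩ ⟨u, hu⟩ h
    simp only [Subtype.mk.injEq, Sum.inl.injEq] at h
    exact Subtype.ext (Sum.inl.inj (congrArg Subtype.val h))
  · rintro ⟨x, hx⟩
    have hadj : (SGGraph G).Adj (Sum.inr e) x := hx
    rcases hadj with ⟨w, f, h1, h2, h3⟩ | ⟨w, f, h1, h2, h3⟩
    · exact absurd h1 (by simp)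
    · obtain rfl := Sum.inr.inj h1
      exact ⟨⟨w, h3⟩, Subtype.ext h2.symm⟩

lemma card_nb_SGtn_inl (n t : ℕ) (i : Fin (n+1)) (v : V) :
    Nat.card ((SGtnGraph G n t).neighborSet (Sum.inl (i, v))) = (t+1) * dve G v := by
  have h : Nat.card ((SGtnGraph G n t).neighborSet (Sum.inl (i, v)))
      = Nat.card (Fin (t+1) × {e : G.edgeSet // v ∈ (e : Sym2 V)}) := by
    apply Nat.card_congr
    apply Equiv.symm
    refine Equiv.ofBijective
      (fun p => ⟨Sum.inr (p.1, p.2.1), Or.inl ⟨(i, v), (p.1, p.2.1), rfl, rfl, p.2.2⟩⟩)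
      ⟨?_, ?_⟩
    · rintro ⟨j, e, he⟩ ⟨j', f, hf⟩ h
      simp only [Subtype.mk.injEq, Sum.inr.injEq, Prod.mk.injEq] at h
      have h' := congrArg Subtype.val h
      simp only [Sum.inr.injEq, Prod.mk.injEq] at h'
      obtain ⟨rfl, h2⟩ := h'
      exact Prod.ext rfl (Subtype.ext h2)
    · rintro ⟨x, hx⟩
      have hadj : (SGtnGraph G n t).Adj (Sum.inl (i, v)) x := hx
      rcases hadj with ⟨w, f, h1, h2, h3⟩ | ⟨w, f, h1, h2, h3⟩
      · obtain rfl := Sum.inl.inj h1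
        exact ⟨(f.1, ⟨f.2, h3⟩), Subtype.ext h2.symm⟩
      · exact absurd h1 (by simp)
  rw [h, Nat.card_prod, Nat.card_eq_fintype_card, Fintype.card_fin, dve]

lemma card_nb_SGtn_inr (n t : ℕ) (j : Fin (t+1)) (e : G.edgeSet) :
    Nat.card ((SGtnGraph G n t).neighborSet (Sum.inr (j, e))) = (n+1) * dev G e := by
  have h : Nat.card ((SGtnGraph G n t).neighborSet (Sum.inr (j, e)))
      = Nat.card (Fin (n+1) × {w : V // w ∈ (e : Sym2 V)}) := by
    apply Nat.card_congr
    apply Equiv.symm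
    refine Equiv.ofBijective
      (fun p => ⟨Sum.inl (p.1, p.2.1), Or.inr ⟨(p.1, p.2.1), (j, e), rfl, rfl, p.2.2⟩⟩)
      ⟨?_, ?_⟩
    · rintro ⟨i, w, hw⟩ ⟨i', u, hu⟩ h
      simp only [Subtype.mk.injEq, Sum.inl.injEq, Prod.mk.injEq] at h
      have h' := congrArg Subtype.val h
      simp only [Sum.inl.injEq, Prod.mk.injEq] at h'
      obtain ⟨rfl, h2⟩ := h'
      exact Prod.ext rfl (Subtype.ext h2)
    · rintro ⟨x, hx⟩
      have hadj : (SGtnGraph G n t).Adj (Sum.inr (j, e)) x := hx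
      rcases hadj with ⟨w, f, h1, h2, h3⟩ | ⟨w, f, h1, h2, h3⟩
      · exact absurd h1 (by simp)
      · obtain rfl := Sum.inr.inj h1
        exact ⟨(w.1, ⟨w.2, h3⟩), Subtype.ext h2.symm⟩
  rw [h, Nat.card_prod, Nat.card_eq_fintype_card, Fintype.card_fin, dev]

/-- The `V × E` block of the Randić matrix of `S(G)`. -/
def RveM : Matrix V G.edgeSet ℝ :=
  fun v e => if v ∈ (e : Sym2 V) then 1 / Real.sqrt ((dve G v : ℝ) * (dev G e : ℝ)) else 0

lemma small_block :
    randicMatrix (SGGraph G) = Matrix.fromBlocks 0 (RveM G) (RveM G)ᵀ 0 := by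
  ext x y
  rcases x with v | e <;> rcases y with w | f
  · simp [randicMatrix, SG_adj_inl_inl]
  · by_cases h : v ∈ (f : Sym2 V)
    · simp only [randicMatrix, Matrix.fromBlocks_apply₁₂, RveM, if_pos h,
        if_pos ((SG_adj_inl_inr G v f).mpr h), card_nb_SG_inl, card_nb_SG_inr]
      push_cast
      ring_nf
    · simp only [randicMatrix, Matrix.fromBlocks_apply₁₂, RveM, if_neg h,
        if_neg (fun hc => h ((SG_adj_inl_inr G v f).mp hc))]
  · by_cases h : w ∈ (e : Sym2 V)
    · simp only [randicMatrix, Matrix.fromBlocks_apply₂₁, RveM, Matrix.transpose_apply,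
        if_pos h, if_pos ((SG_adj_inr_inl G w e).mpr h), card_nb_SG_inl, card_nb_SG_inr]
      push_cast
      ring_nf
    · simp only [randicMatrix, Matrix.fromBlocks_apply₂₁, RveM, Matrix.transpose_apply,
        if_neg h, if_neg (fun hc => h ((SG_adj_inr_inl G w e).mp hc))]
  · simp [randicMatrix, SG_adj_inr_inr]

/-- The rectangular block of the Randić matrix of `S(G)ₜⁿ`. -/
def bigM (n t : ℕ) : Matrix (Fin (n+1) × V) (Fin (t+1) × G.edgeSet) ℝ :=
  (Real.sqrt (((n:ℝ)+1) * ((t:ℝ)+1)))⁻¹ • (Jones n t ⊗ₖ RveM G)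

lemma bigM_entry (n t : ℕ) (i : Fin (n+1)) (v : V) (j : Fin (t+1)) (e : G.edgeSet)
    (h : v ∈ (e : Sym2 V)) :
    bigM G n t (i, v) (j, e)
      = 1 / Real.sqrt ((((t+1) * dve G v : ℕ) : ℝ) * (((n+1) * dev G e : ℕ) : ℝ)) := by
  rw [bigM, Matrix.smul_apply, Matrix.kroneckerMap_apply]
  simp only [Jones]
  rw [RveM, if_pos h, smul_eq_mul, one_mul]
  rw [show (((t+1) * dve G v : ℕ):ℝ) = ((t:ℝ)+1) * (dve G v:ℝ) by push_cast; ring]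
  rw [show (((n+1) * dev G e : ℕ):ℝ) = ((n:ℝ)+1) * (dev G e:ℝ) by push_cast; ring]
  rw [show ((t:ℝ)+1) * (dve G v:ℝ) * (((n:ℝ)+1) * (dev G e:ℝ))
      = (((n:ℝ)+1)*((t:ℝ)+1)) * ((dve G v:ℝ)*(dev G e:ℝ)) by ring]
  conv_rhs => rw [Real.sqrt_mul (by positivity)]
  rw [one_div, one_div, mul_inv]

lemma big_block (n t : ℕ) :
    randicMatrix (SGtnGraph G n t) = Matrix.fromBlocks 0 (bigM G n t) (bigM G n t)ᵀ 0 := by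
  ext x y
  rcases x with ⟨i, v⟩ | ⟨j, e⟩ <;> rcases y with ⟨i', w⟩ | ⟨j', f⟩
  · simp [randicMatrix, SGtn_adj_inl_inl]
  · by_cases h : v ∈ (f : Sym2 V)
    · simp only [randicMatrix, Matrix.fromBlocks_apply₁₂,
        if_pos ((SGtn_adj_inl_inr G n t (i, v) (j', f)).mpr h), card_nb_SGtn_inl,
        card_nb_SGtn_inr, bigM_entry G n t i v j' f h]
      norm_cast
    · simp only [randicMatrix, Matrix.fromBlocks_apply₁₂,
        if_neg (fun hc => h ((SGtn_adj_inl_inr G n t (i, v) (j', f)).mp hc)),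
        bigM, Matrix.smul_apply, Matrix.kroneckerMap_apply, RveM, if_neg h, smul_eq_mul,
        mul_zero, Jones]
  · by_cases h : w ∈ (e : Sym2 V)
    · simp only [randicMatrix, Matrix.fromBlocks_apply₂₁, Matrix.transpose_apply,
        if_pos ((SGtn_adj_inr_inl G n t (i', w) (j, e)).mpr h), card_nb_SGtn_inl,
        card_nb_SGtn_inr, bigM_entry G n t i' w j e h]
      rw [Nat.mul_comm ((n+1) * dev G e) ((t+1) * dve G w)]
      norm_cast
    · simp only [randicMatrix, Matrix.fromBlocks_apply₂₁, Matrix.transpose_apply,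
        if_neg (fun hc => h ((SGtn_adj_inr_inl G n t (i', w) (j, e)).mp hc)),
        bigM, Matrix.smul_apply, Matrix.kroneckerMap_apply, RveM, if_neg h, smul_eq_mul,
        mul_zero, Jones]
  · simp [randicMatrix, SGtn_adj_inr_inr]

end GraphAux


section MainAux

/-- Explicit inverse of the index-splitting bijection. -/
def padFun (n t : ℕ) (A B : Type) :
    ((A ⊕ B) ⊕ (({i : Fin (n+1) // i ≠ 0} × A) ⊕ ({j : Fin (t+1) // j ≠ 0} × B))) →
      ((Fin (n+1) × A) ⊕ (Fin (t+1) × B))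
  | Sum.inl (Sum.inl v) => Sum.inl (0, v)
  | Sum.inl (Sum.inr e) => Sum.inr (0, e)
  | Sum.inr (Sum.inl (i, v)) => Sum.inl (i.1, v)
  | Sum.inr (Sum.inr (j, e)) => Sum.inr (j.1, e)

lemma padFun_bij (n t : ℕ) (A B : Type) : Function.Bijective (padFun n t A B) := by
  constructor
  · rintro ((v|e)|(⟨⟨i,hi⟩,v⟩|⟨⟨j,hj⟩,e⟩)) ((w|f)|(⟨⟨i',hi'⟩,w⟩|⟨⟨j',hj'⟩,f⟩)) h <;>
      simp_all [padFun, Prod.ext_iff, Subtype.ext_iff] <;> tauto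
  · rintro (⟨i, v⟩ | ⟨j, e⟩)
    · by_cases h : i = 0
      · exact ⟨Sum.inl (Sum.inl v), by subst h; rfl⟩
      · exact ⟨Sum.inr (Sum.inl (⟨i, h⟩, v)), rfl⟩
    · by_cases h : j = 0
      · exact ⟨Sum.inl (Sum.inr e), by subst h; rfl⟩
      · exact ⟨Sum.inr (Sum.inr (⟨j, h⟩, e)), rfl⟩

/-- The index-splitting equivalence. -/
def padEquiv (n t : ℕ) (A B : Type) :
    ((A ⊕ B) ⊕ (({i : Fin (n+1) // i ≠ 0} × A) ⊕ ({j : Fin (t+1) // j ≠ 0} × B))) ≃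
      ((Fin (n+1) × A) ⊕ (Fin (t+1) × B)) :=
  Equiv.ofBijective _ (padFun_bij n t A B)

lemma charpoly_submatrix {r r' : Type} [Fintype r] [DecidableEq r] [Fintype r'] [DecidableEq r']
    (e : r ≃ r') (M : Matrix r' r' ℝ) : (M.submatrix e e).charpoly = M.charpoly := by
  have h := Matrix.charpoly_reindex (R := ℝ) e.symm M
  rwa [Matrix.reindex_apply, Equiv.symm_symm] at h

lemma kronOrtho (m : ℕ) (W : Type) [Fintype W] [DecidableEq W] :
    (hh m ⊗ₖ (1 : Matrix W W ℝ)) * (hh m ⊗ₖ (1 : Matrix W W ℝ))ᵀ = 1 := by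
  rw [← Matrix.kroneckerMap_transpose, hh_transpose, Matrix.transpose_one,
    ← Matrix.mul_kronecker_mul, hh_mul_self, Matrix.one_mul, Matrix.one_kronecker_one]

lemma kronSymm (m : ℕ) (W : Type) [Fintype W] [DecidableEq W] :
    (hh m ⊗ₖ (1 : Matrix W W ℝ))ᵀ = hh m ⊗ₖ (1 : Matrix W W ℝ) := by
  rw [← Matrix.kroneckerMap_transpose, hh_transpose, Matrix.transpose_one]

variable {V : Type} [Fintype V] [DecidableEq V] (G : SimpleGraph V) [DecidableRel G.Adj]

lemma perm_block (n t : ℕ) :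
    (Matrix.fromBlocks 0 (E00 n t ⊗ₖ RveM G) (E00 n t ⊗ₖ RveM G)ᵀ 0).submatrix
      (padEquiv n t V G.edgeSet) (padEquiv n t V G.edgeSet)
    = Matrix.fromBlocks (Matrix.fromBlocks 0 (RveM G) (RveM G)ᵀ 0) 0 0
        (0 : Matrix (({i : Fin (n+1) // i ≠ 0} × V) ⊕ ({j : Fin (t+1) // j ≠ 0} × G.edgeSet))
             (({i : Fin (n+1) // i ≠ 0} × V) ⊕ ({j : Fin (t+1) // j ≠ 0} × G.edgeSet)) ℝ) := by
  ext x y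
  rcases x with ((v|e)|(⟨⟨i,hi⟩,v⟩|⟨⟨j,hj⟩,e⟩)) <;>
    rcases y with ((w|f)|(⟨⟨i',hi'⟩,w⟩|⟨⟨j',hj'⟩,f⟩)) <;>
      simp_all [padEquiv, padFun, E00, Matrix.submatrix_apply, Equiv.ofBijective_apply,
        Matrix.kroneckerMap_apply]

lemma core_block (n t : ℕ) :
    (hh n ⊗ₖ (1 : Matrix V V ℝ))ᵀ * bigM G n t * (hh t ⊗ₖ (1 : Matrix G.edgeSet G.edgeSet ℝ))
      = E00 n t ⊗ₖ RveM G := by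
  rw [bigM, Matrix.mul_smul, Matrix.smul_mul]
  rw [kronSymm]
  rw [← Matrix.mul_kronecker_mul, ← Matrix.mul_kronecker_mul]
  rw [Matrix.one_mul, Matrix.mul_one]
  conv_lhs => rw [show hh n = (hh n)ᵀ from (hh_transpose n).symm]
  rw [hh_conj_ones, Matrix.smul_kronecker, smul_smul,
    inv_mul_cancel₀ (by positivity : Real.sqrt (((n:ℝ)+1) * ((t:ℝ)+1)) ≠ 0), one_smul]

lemma conj_eq (n t : ℕ) :
    (Matrix.fromBlocks (hh n ⊗ₖ (1 : Matrix V V ℝ)) 0 0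
        (hh t ⊗ₖ (1 : Matrix G.edgeSet G.edgeSet ℝ)))ᵀ
      * randicMatrix (SGtnGraph G n t)
      * (Matrix.fromBlocks (hh n ⊗ₖ (1 : Matrix V V ℝ)) 0 0
          (hh t ⊗ₖ (1 : Matrix G.edgeSet G.edgeSet ℝ)))
    = Matrix.fromBlocks 0 (E00 n t ⊗ₖ RveM G) (E00 n t ⊗ₖ RveM G)ᵀ 0 := by
  rw [big_block, Matrix.fromBlocks_transpose, Matrix.transpose_zero, Matrix.transpose_zero,
    Matrix.fromBlocks_multiply, Matrix.fromBlocks_multiply]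
  simp only [Matrix.mul_zero, Matrix.zero_mul, add_zero, zero_add]
  have h2 : (hh t ⊗ₖ (1 : Matrix G.edgeSet G.edgeSet ℝ))ᵀ * (bigM G n t)ᵀ
      * (hh n ⊗ₖ (1 : Matrix V V ℝ)) = (E00 n t ⊗ₖ RveM G)ᵀ := by
    rw [← core_block G n t, Matrix.transpose_mul, Matrix.transpose_mul,
      Matrix.transpose_transpose, Matrix.mul_assoc]
  rw [core_block, h2]

end MainAux

/-- `ε_R(S(G)_t^n) = ε_R(S(G))` for `t = n` or `t = n−1`. -/
theorem stmt_10 (V : Type) [Fintype V] [DecidableEq V] (G : SimpleGraph V) [DecidableRel G.Adj]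
    (hiso : NoIsolated G) (n t : ℕ) (hn : 1 ≤ n) (ht : t = n ∨ t = n - 1) :
    matEnergy (randicMatrix (SGtnGraph G n t)) = matEnergy (randicMatrix (SGGraph G)) := by
  classical
  have hA := randic_herm (SGtnGraph G n t)
  have hB := randic_herm (SGGraph G)
  apply matEnergy_of_charpoly_mul hA hB
    (Fintype.card (({i : Fin (n+1) // i ≠ 0} × V) ⊕ ({j : Fin (t+1) // j ≠ 0} × G.edgeSet)))
  set Q : Matrix ((Fin (n+1) × V) ⊕ (Fin (t+1) × G.edgeSet))
      ((Fin (n+1) × V) ⊕ (Fin (t+1) × G.edgeSet)) ℝ :=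
    Matrix.fromBlocks (hh n ⊗ₖ (1 : Matrix V V ℝ)) 0 0
      (hh t ⊗ₖ (1 : Matrix G.edgeSet G.edgeSet ℝ)) with hQdef
  have hQ : Q * Qᵀ = 1 := by
    rw [hQdef, Matrix.fromBlocks_transpose, Matrix.transpose_zero, Matrix.transpose_zero,
      Matrix.fromBlocks_multiply]
    simp only [Matrix.mul_zero, Matrix.zero_mul, add_zero, zero_add, kronOrtho]
    exact Matrix.fromBlocks_one
  have h1 : (randicMatrix (SGtnGraph G n t)).charpoly
      = (Matrix.fromBlocks 0 (E00 n t ⊗ₖ RveM G) (E00 n t ⊗ₖ RveM G)ᵀ 0).charpoly := by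
    rw [← conj_eq G n t, charpoly_conj _ _ hQ]
  rw [h1, ← charpoly_submatrix (padEquiv n t V G.edgeSet) _, perm_block,
    Matrix.charpoly_fromBlocks_zero₁₂, charpoly_zero_mat, ← small_block]

end
end
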